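/- arXiv:math/0209375 — 3 statements merged into one kernel-verified Lean document; each statement's English description precedes it below -/
import Mathlib

section
/- Let A = k[x_1,...,x_m]/I be a standard graded algebra of dimension d over an infinite field k. There exists a descending chain of projective varieties V_0 ⊇ V_1 ⊇ V_2 ⊇ ... in P_k^{md−1} (defined as zero loci of the ideals of maximal minors of the generic matrices M_n(u)) such that for every α ∈ P_k^{md−1} parameterizing an ideal Q generated by d linear forms, and every n ≥ 0: Q is a minimal reduction of A with r_Q(A) = n if and only if α ∈ V_n \ V_{n+1}. -/
/-!
Let `Q` be generated by the linear forms `yᵢ = ∑ⱼ αᵢⱼ xⱼ`. Since `I` is homogeneous, taking the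
degree `n + 1` component of a relation `p ≡ ∑ cᵢ yᵢ (mod I)` shows that `Q_{n+1} = A_{n+1}` iff
`A_{n+1}` is spanned by the classes of `b yᵢ`, `b` running through a basis of `R_n`. Those vectors
depend linearly on `α`, so their coordinates in a basis of `A_{n+1}` form a matrix of linear forms
in `α`, and they span iff some maximal minor is nonzero. Thus `Q_{n+1} ≠ A_{n+1}` defines the
projective variety `V_{n+1}`; as `Q_n = A_n` forces `Q_{n+1} = A_{n+1}`, the `V_n` descend and
`r_Q(A) = n` exactly on `V_n \ V_{n+1}`.
-/

set_option synthInstance.maxHeartbeats 1000000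
set_option maxHeartbeats 1000000

open MvPolynomial

/-- The degree-`n` graded component of the standard graded algebra `A = k[x₁,...,xₘ]/I`. -/
noncomputable def gpiece (k : Type*) [Field k] (m : ℕ)
    (I : Ideal (MvPolynomial (Fin m) k)) (n : ℕ) :
    Submodule k (MvPolynomial (Fin m) k ⧸ I) :=
  (homogeneousSubmodule (Fin m) k n).map (Ideal.Quotient.mkₐ k I).toLinearMap

/-- `Q_n = A_n`. -/
def gfull {k : Type*} [Field k] {m : ℕ} (I : Ideal (MvPolynomial (Fin m) k))
    (Q : Ideal (MvPolynomial (Fin m) k ⧸ I)) (n : ℕ) : Prop :=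
  gpiece k m I n ≤ Q.restrictScalars k

/-- `Q` is a minimal reduction of `A = R/I` of dimension `d`: it is generated by `d`
linear forms and `Q_n = A_n` for all large `n`. -/
def isMinRed (k : Type*) [Field k] (m d : ℕ) (I : Ideal (MvPolynomial (Fin m) k))
    (Q : Ideal (MvPolynomial (Fin m) k ⧸ I)) : Prop :=
  (∃ y : Fin d → MvPolynomial (Fin m) k,
      (∀ i, y i ∈ homogeneousSubmodule (Fin m) k 1) ∧
      Q = Ideal.span (Set.range fun i => Ideal.Quotient.mk I (y i))) ∧
  (∃ N : ℕ, ∀ n ≥ N, gfull I Q n)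

/-- The reduction number `r_Q(A) = min{n : Q_{n+1} = A_{n+1}}`. -/
noncomputable def redNum {k : Type*} [Field k] {m : ℕ}
    (I : Ideal (MvPolynomial (Fin m) k))
    (Q : Ideal (MvPolynomial (Fin m) k ⧸ I)) : ℕ :=
  sInf {n : ℕ | gfull I Q (n + 1)}

/-- The reduction number `r(A) = min{r_Q(A) : Q a minimal reduction of A}`,
for `A = R/I` of dimension `d`. -/
noncomputable def rAlg (k : Type*) [Field k] (m d : ℕ)
    (I : Ideal (MvPolynomial (Fin m) k)) : ℕ :=
  sInf {r : ℕ | ∃ Q, isMinRed k m d I Q ∧ redNum I Q = r}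

/-- The ideal of `A = R/I` generated by the `d` linear forms with coefficient matrix `α`. -/
noncomputable def paramIdeal (k : Type*) [Field k] (m d : ℕ)
    (I : Ideal (MvPolynomial (Fin m) k)) (α : Fin d × Fin m → k) :
    Ideal (MvPolynomial (Fin m) k ⧸ I) :=
  Ideal.span (Set.range fun i : Fin d =>
    Ideal.Quotient.mk I (∑ j : Fin m, C (α (i, j)) * X j))


namespace MvPolynomial

variable {σ R : Type*} [CommSemiring R]

lemma homogeneousComponent_add_mul_of_isHomogeneous {y : MvPolynomial σ R} {j : ℕ}
    (hy : y.IsHomogeneous j) (c : MvPolynomial σ R) (n : ℕ) :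
    homogeneousComponent (n + j) (c * y) = homogeneousComponent n c * y := by
  conv_lhs => rw [← sum_homogeneousComponent c, Finset.sum_mul, map_sum]
  have hterm (t : ℕ) : homogeneousComponent (n + j) (homogeneousComponent t c * y)
      = if t = n then homogeneousComponent t c * y else 0 := by
    rw [homogeneousComponent_of_mem ((homogeneousComponent_isHomogeneous t c).mul hy)]
    simp only [Nat.add_right_cancel_iff, eq_comm]
  simp only [hterm, Finset.sum_ite_eq', Finset.mem_range]
  split_ifs with hn
  · rfl
  · rw [homogeneousComponent_eq_zero _ _ (by omega), zero_mul]

lemma exists_homogeneousComponent_eq_sum_mul {ι : Type*} [Fintype ι] {y : ι → MvPolynomial σ R}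
    (hy : ∀ i, (y i).IsHomogeneous 1) {q : MvPolynomial σ R}
    (hq : q ∈ Ideal.span (Set.range y)) (n : ℕ) :
    ∃ e : ι → MvPolynomial σ R, (∀ i, (e i).IsHomogeneous n) ∧
      homogeneousComponent (n + 1) q = ∑ i, e i * y i := by
  obtain ⟨c, rfl⟩ := Ideal.mem_span_range_iff_exists_fun.1 hq
  refine ⟨fun i => homogeneousComponent n (c i), fun i => homogeneousComponent_isHomogeneous _ _,
    ?_⟩
  simp only [map_sum, homogeneousComponent_add_mul_of_isHomogeneous (hy _)]

lemma mem_ideal_span_range_X_of_isHomogeneous {p : MvPolynomial σ R} {n : ℕ}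
    (hp : p.IsHomogeneous (n + 1)) : p ∈ Ideal.span (Set.range X) := by
  rw [← Set.image_univ, mem_ideal_span_X_image]
  intro μ hμ
  by_contra! h
  have hμ0 : μ = 0 := Finsupp.ext fun i => h i (Set.mem_univ i)
  have := hp (mem_support_iff.1 hμ)
  simp [hμ0] at this

end MvPolynomial

lemma MvPolynomial.IsHomogeneous.det {σ R ι : Type*} [CommRing R] [Fintype ι] [DecidableEq ι]
    {M : Matrix ι ι (MvPolynomial σ R)} (hM : ∀ i j, (M i j).IsHomogeneous 1) :
    M.det.IsHomogeneous (Fintype.card ι) := by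
  rw [Matrix.det_apply, ← mem_homogeneousSubmodule]
  refine Submodule.sum_mem _ fun τ _ => ?_
  rw [Units.smul_def]
  refine zsmul_mem ((mem_homogeneousSubmodule _ _).2 ?_) _
  simpa using IsHomogeneous.prod Finset.univ _ (fun _ => 1) fun i _ => hM (τ i) i

namespace Module.Basis

lemma span_eq_top_iff_exists_det_ne_zero {k G ρ ι : Type*} [Field k] [AddCommGroup G]
    [Module k G] [Fintype ρ] [DecidableEq ρ] (w : Basis ρ k G) (v : ι → G) :
    Submodule.span k (Set.range v) = ⊤ ↔ ∃ g : ρ → ι, w.det (v ∘ g) ≠ 0 := by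
  constructor
  · intro hv
    obtain ⟨κ, a, -, hsp, hli⟩ := exists_linearIndependent' k v
    let B : Basis κ k G := Basis.mk hli (by rw [hsp, hv])
    let e : κ ≃ ρ := B.indexEquiv w
    refine ⟨a ∘ e.symm, ?_⟩
    have hB : v ∘ (a ∘ e.symm) = B.reindex e := by
      ext j; simp [B]
    rw [hB]
    exact (w.isUnit_det _).ne_zero
  · rintro ⟨g, hg⟩
    refine top_unique ?_
    rw [← ((w.is_basis_iff_det).2 (isUnit_iff_ne_zero.2 hg)).2]
    exact Submodule.span_mono (Set.range_comp_subset_range g v)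

end Module.Basis

lemma Nat.exists_and_sInf_eq_iff {P : ℕ → Prop} {n : ℕ} :
    ((∃ t, P t) ∧ sInf {t | P t} = n) ↔ P n ∧ ∀ t < n, ¬ P t := by
  constructor
  · rintro ⟨h, rfl⟩
    exact ⟨Nat.sInf_mem h, fun t ht => Nat.notMem_of_lt_sInf ht⟩
  · rintro ⟨hn, hlt⟩
    exact ⟨⟨n, hn⟩, le_antisymm (Nat.sInf_le hn)
      (le_csInf ⟨n, hn⟩ fun t ht => not_lt.1 fun h => hlt t h ht)⟩

lemma Submodule.le_span_range_coe_iff {k M ι : Type*} [Field k] [AddCommGroup M] [Module k M]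
    {G : Submodule k M} (v : ι → G) :
    G ≤ Submodule.span k (Set.range fun i => (v i : M)) ↔ Submodule.span k (Set.range v) = ⊤ := by
  have hmap : (Submodule.span k (Set.range v)).map G.subtype
      = Submodule.span k (Set.range fun i => (v i : M)) := by
    rw [Submodule.map_span, ← Set.range_comp]; rfl
  rw [← Submodule.comap_subtype_eq_top, ← hmap,
    Submodule.comap_map_eq_of_injective G.injective_subtype]

section GradedPieces

variable {k : Type*} [Field k] {m : ℕ} {I : Ideal (MvPolynomial (Fin m) k)}

instance (n : ℕ) : FiniteDimensional k (homogeneousSubmodule (Fin m) k n) :=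
  Module.Finite.iff_fg.2 (homogeneousSubmodule_fg _ _ n)

instance (I : Ideal (MvPolynomial (Fin m) k)) (n : ℕ) : FiniteDimensional k (gpiece k m I n) :=
  Module.Finite.map _ _

lemma mem_gpiece_iff {n : ℕ} {x : MvPolynomial (Fin m) k ⧸ I} :
    x ∈ gpiece k m I n ↔
      ∃ p : MvPolynomial (Fin m) k, p.IsHomogeneous n ∧ Ideal.Quotient.mk I p = x := by
  simp [gpiece, Submodule.mem_map, mem_homogeneousSubmodule, Ideal.Quotient.mkₐ_eq_mk]

lemma gfull_succ {Q : Ideal (MvPolynomial (Fin m) k ⧸ I)} {n : ℕ} (h : gfull I Q n) :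
    gfull I Q (n + 1) := by
  intro x hx
  obtain ⟨p, hp, rfl⟩ := mem_gpiece_iff.1 hx
  obtain ⟨e, he, hpe⟩ := exists_homogeneousComponent_eq_sum_mul (fun j => isHomogeneous_X k j)
    (mem_ideal_span_range_X_of_isHomogeneous hp) n
  rw [homogeneousComponent_eq_self hp] at hpe
  rw [Submodule.restrictScalars_mem, hpe, map_sum]
  refine Ideal.sum_mem _ fun j _ => ?_
  rw [map_mul]
  exact Ideal.mul_mem_right _ _ (h (mem_gpiece_iff.2 ⟨e j, he j, rfl⟩))

lemma gfull_mono {Q : Ideal (MvPolynomial (Fin m) k ⧸ I)} : Monotone (gfull I Q) :=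
  monotone_nat_of_le_succ fun _ => gfull_succ

end GradedPieces

section ParamIdeal

variable {k : Type*} [Field k] {m d : ℕ} {I : Ideal (MvPolynomial (Fin m) k)}

noncomputable def linearForm (α : Fin d × Fin m → k) (i : Fin d) : MvPolynomial (Fin m) k :=
  ∑ j, C (α (i, j)) * X j

lemma isHomogeneous_linearForm (α : Fin d × Fin m → k) (i : Fin d) :
    (linearForm α i).IsHomogeneous 1 :=
  IsHomogeneous.sum _ _ _ fun _ _ => isHomogeneous_C_mul_X _ _

lemma isMinRed_paramIdeal_iff (α : Fin d × Fin m → k) :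
    isMinRed k m d I (paramIdeal k m d I α) ↔ ∃ n, gfull I (paramIdeal k m d I α) (n + 1) := by
  constructor
  · rintro ⟨-, N, hN⟩
    exact ⟨N, hN _ N.le_succ⟩
  · rintro ⟨n, hn⟩
    refine ⟨⟨linearForm α, fun i => (mem_homogeneousSubmodule _ _).2 (isHomogeneous_linearForm α i),
      rfl⟩, n + 1, fun t ht => gfull_mono ht hn⟩

noncomputable abbrev homBasis (k : Type*) [Field k] (m n : ℕ) :
    Module.Basis (Fin (Module.finrank k (homogeneousSubmodule (Fin m) k n))) k
      (homogeneousSubmodule (Fin m) k n) :=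
  Module.finBasis k _

variable (I)

local notation "r" n => Module.finrank k (homogeneousSubmodule (Fin m) k n)

noncomputable def basisMulX (n : ℕ) (j : Fin m) (s : Fin (r n)) : gpiece k m I (n + 1) :=
  ⟨Ideal.Quotient.mk I ((homBasis k m n s : MvPolynomial (Fin m) k) * X j),
    mem_gpiece_iff.2 ⟨_, ((mem_homogeneousSubmodule _ _).1 (homBasis k m n s).2).mul
      (isHomogeneous_X k j), rfl⟩⟩

noncomputable def basisMulForm (n : ℕ) (α : Fin d × Fin m → k) (c : Fin d × Fin (r n)) :
    gpiece k m I (n + 1) :=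
  ∑ j, α (c.1, j) • basisMulX I n j c.2

lemma coe_basisMulForm (n : ℕ) (α : Fin d × Fin m → k) (c : Fin d × Fin (r n)) :
    (basisMulForm I n α c : MvPolynomial (Fin m) k ⧸ I)
      = Ideal.Quotient.mk I ((homBasis k m n c.2 : MvPolynomial (Fin m) k) * linearForm α c.1) := by
  simp only [basisMulForm, basisMulX, linearForm, Submodule.coe_sum, Submodule.coe_smul,
    Finset.mul_sum, map_sum]
  refine Finset.sum_congr rfl fun j _ => ?_
  rw [← Ideal.Quotient.mkₐ_eq_mk k, ← map_smul, smul_eq_C_mul, mul_left_comm]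

lemma gfull_succ_paramIdeal_iff (hI : ∀ f ∈ I, ∀ n : ℕ, homogeneousComponent n f ∈ I)
    (α : Fin d × Fin m → k) (n : ℕ) :
    gfull I (paramIdeal k m d I α) (n + 1) ↔
      Submodule.span k (Set.range (basisMulForm I n α)) = ⊤ := by
  rw [← Submodule.le_span_range_coe_iff]
  simp only [coe_basisMulForm]
  set W := Submodule.span k (Set.range fun c : Fin d × Fin (r n) =>
    Ideal.Quotient.mk I ((homBasis k m n c.2 : MvPolynomial (Fin m) k) * linearForm α c.1))
  constructor
  · intro h x hx
    obtain ⟨p, hp, rfl⟩ := mem_gpiece_iff.1 hx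
    have hpQ : Ideal.Quotient.mk I p ∈ Ideal.map (Ideal.Quotient.mk I)
        (Ideal.span (Set.range (linearForm α))) := by
      rw [Ideal.map_span, ← Set.range_comp]
      exact h hx
    obtain ⟨q, hq, hqp⟩ := (Ideal.mem_map_iff_of_surjective _ Ideal.Quotient.mk_surjective).1 hpQ
    obtain ⟨e, he, hqe⟩ :=
      exists_homogeneousComponent_eq_sum_mul (isHomogeneous_linearForm α) hq n
    have hpe : Ideal.Quotient.mk I p = Ideal.Quotient.mk I (∑ i, e i * linearForm α i) := by
      rw [Ideal.Quotient.eq, ← hqe, ← homogeneousComponent_eq_self hp, ← map_sub]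
      exact hI _ (Ideal.Quotient.eq.1 hqp.symm) _
    rw [hpe, map_sum]
    refine Submodule.sum_mem _ fun i _ => ?_
    let f : homogeneousSubmodule (Fin m) k n →ₗ[k] MvPolynomial (Fin m) k ⧸ I :=
      (Ideal.Quotient.mkₐ k I).toLinearMap ∘ₗ LinearMap.mulRight k (linearForm α i) ∘ₗ
        (homogeneousSubmodule (Fin m) k n).subtype
    change f ⟨e i, he i⟩ ∈ W
    rw [← (homBasis k m n).sum_repr ⟨e i, he i⟩, map_sum]
    refine Submodule.sum_mem _ fun s _ => ?_
    rw [map_smul]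
    exact Submodule.smul_mem _ _ (Submodule.subset_span ⟨(i, s), rfl⟩)
  · intro h
    refine h.trans (Submodule.span_le.2 ?_)
    rintro _ ⟨c, rfl⟩
    rw [SetLike.mem_coe, Submodule.restrictScalars_mem]
    beta_reduce
    rw [map_mul]
    exact Ideal.mul_mem_left _ _ (Ideal.subset_span ⟨c.1, rfl⟩)

/-- The paper's `M_n(u)` also has columns `f_j h` for generators `f_j` of `I`; we avoid them by
taking coordinates in a basis of `A_{n+1}` rather than of `R_{n+1}`. -/
noncomputable def genericMatrix (d n : ℕ) :
    Matrix (Fin (Module.finrank k (gpiece k m I (n + 1)))) (Fin d × Fin (r n))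
      (MvPolynomial (Fin d × Fin m) k) :=
  Matrix.of fun b c =>
    ∑ j, C ((Module.finBasis k (gpiece k m I (n + 1))).repr (basisMulX I n j c.2) b) * X (c.1, j)

lemma genericMatrix_map_eval (n : ℕ) (α : Fin d × Fin m → k) :
    (genericMatrix I d n).map (eval α)
      = (Module.finBasis k (gpiece k m I (n + 1))).toMatrix (basisMulForm I n α) := by
  ext b c
  simp [genericMatrix, Module.Basis.toMatrix_apply, basisMulForm, mul_comm]

noncomputable def maxMinors (d n : ℕ) : Set (MvPolynomial (Fin d × Fin m) k) :=
  Set.range fun g : Fin (Module.finrank k (gpiece k m I (n + 1))) → Fin d × Fin (r n) =>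
    ((genericMatrix I d n).submatrix id g).det

lemma isHomogeneous_of_mem_maxMinors {n : ℕ} {p : MvPolynomial (Fin d × Fin m) k}
    (hp : p ∈ maxMinors I d n) : p.IsHomogeneous (Module.finrank k (gpiece k m I (n + 1))) := by
  obtain ⟨g, rfl⟩ := hp
  have hentries (b c) : ((genericMatrix I d n).submatrix id g b c).IsHomogeneous 1 := by
    simp only [Matrix.submatrix_apply, genericMatrix, Matrix.of_apply]
    exact .sum _ _ _ fun _ _ => isHomogeneous_C_mul_X _ _
  simpa using IsHomogeneous.det hentries

lemma eval_det_submatrix_genericMatrix (n : ℕ) (α : Fin d × Fin m → k)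
    (g : Fin (Module.finrank k (gpiece k m I (n + 1))) → Fin d × Fin (r n)) :
    eval α ((genericMatrix I d n).submatrix id g).det
      = (Module.finBasis k (gpiece k m I (n + 1))).det (basisMulForm I n α ∘ g) := by
  rw [RingHom.map_det, RingHom.mapMatrix_apply, ← Matrix.submatrix_map, genericMatrix_map_eval,
    Module.Basis.det_apply]
  rfl

lemma forall_eval_maxMinors_eq_zero_iff (hI : ∀ f ∈ I, ∀ n : ℕ, homogeneousComponent n f ∈ I)
    (α : Fin d × Fin m → k) (n : ℕ) :
    (∀ p ∈ maxMinors I d n, eval α p = 0) ↔ ¬ gfull I (paramIdeal k m d I α) (n + 1) := by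
  rw [gfull_succ_paramIdeal_iff I hI,
    Module.Basis.span_eq_top_iff_exists_det_ne_zero (Module.finBasis k _)]
  simp [maxMinors, eval_det_submatrix_genericMatrix]

end ParamIdeal

section ReductionLoci

variable {k : Type*} [Field k] {m : ℕ} (I : Ideal (MvPolynomial (Fin m) k))

noncomputable def reductionLocusEquations (d : ℕ) : ℕ → Set (MvPolynomial (Fin d × Fin m) k)
  | 0 => ∅
  | n + 1 => maxMinors I d n

lemma forall_eval_reductionLocusEquations_eq_zero_iff {d : ℕ}
    (hI : ∀ f ∈ I, ∀ n : ℕ, homogeneousComponent n f ∈ I) (α : Fin d × Fin m → k) (n : ℕ) :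
    (∀ p ∈ reductionLocusEquations I d n, eval α p = 0) ↔
      ∀ t < n, ¬ gfull I (paramIdeal k m d I α) (t + 1) := by
  cases n with
  | zero => simp [reductionLocusEquations]
  | succ n =>
    rw [reductionLocusEquations, forall_eval_maxMinors_eq_zero_iff I hI]
    exact ⟨fun h t ht hfull => h (gfull_mono (by omega) hfull), fun h => h n n.lt_succ_self⟩

end ReductionLoci

theorem stmt6_general (k : Type*) [Field k] (m d : ℕ)
    (I : Ideal (MvPolynomial (Fin m) k))
    (hI : ∀ f ∈ I, ∀ n : ℕ, homogeneousComponent n f ∈ I) :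
    ∃ J : ℕ → Set (MvPolynomial (Fin d × Fin m) k),
      (∀ n, ∀ p ∈ J n, ∃ s : ℕ, p.IsHomogeneous s) ∧
      (∀ n, {α : Fin d × Fin m → k | ∀ p ∈ J (n + 1), eval α p = 0} ⊆
            {α : Fin d × Fin m → k | ∀ p ∈ J n, eval α p = 0}) ∧
      (∀ (α : Fin d × Fin m → k), α ≠ 0 → ∀ n : ℕ,
        (isMinRed k m d I (paramIdeal k m d I α) ∧
            redNum I (paramIdeal k m d I α) = n) ↔
          ((∀ p ∈ J n, eval α p = 0) ∧ ¬ (∀ p ∈ J (n + 1), eval α p = 0))) := by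
  refine ⟨reductionLocusEquations I d, ?_, ?_, ?_⟩
  · rintro (_ | n) p hp
    · exact absurd hp (Set.notMem_empty p)
    · exact ⟨_, isHomogeneous_of_mem_maxMinors I hp⟩
  · intro n α hα
    simp only [Set.mem_ofPred_eq, forall_eval_reductionLocusEquations_eq_zero_iff I hI] at hα ⊢
    exact fun t ht => hα t (by omega)
  · intro α _ n
    rw [forall_eval_reductionLocusEquations_eq_zero_iff I hI,
      forall_eval_reductionLocusEquations_eq_zero_iff I hI, isMinRed_paramIdeal_iff, redNum,
      Nat.exists_and_sInf_eq_iff (P := fun t => gfull I (paramIdeal k m d I α) (t + 1))]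
    constructor
    · rintro ⟨hn, hlt⟩
      exact ⟨hlt, fun h => h n n.lt_succ_self hn⟩
    · rintro ⟨hlt, hn⟩
      push Not at hn
      obtain ⟨t, ht, hfull⟩ := hn
      exact ⟨gfull_mono (by omega) hfull, hlt⟩

/-- there is a descending chain of projective varieties
`V₀ ⊇ V₁ ⊇ ⋯` in `P_k^{md-1}` (zero loci of ideals generated by homogeneous
polynomials in the `md` coordinates, namely ideals of maximal minors of the generic
matrices `M_n(u)`) such that for every nonzero parameter point `α` and every `n ≥ 0`,
the ideal `Q` parameterized by `α` is a minimal reduction of `A` with `r_Q(A) = n`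
if and only if `α ∈ V_n \ V_{n+1}`. -/
theorem stmt6 (k : Type*) [Field k] [Infinite k] (m d : ℕ)
    (I : Ideal (MvPolynomial (Fin m) k))
    (hI : ∀ f ∈ I, ∀ n : ℕ, homogeneousComponent n f ∈ I)
    (hd : ringKrullDim (MvPolynomial (Fin m) k ⧸ I) = d) :
    ∃ J : ℕ → Set (MvPolynomial (Fin d × Fin m) k),
      (∀ n, ∀ p ∈ J n, ∃ s : ℕ, p.IsHomogeneous s) ∧
      (∀ n, {α : Fin d × Fin m → k | ∀ p ∈ J (n + 1), eval α p = 0} ⊆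
            {α : Fin d × Fin m → k | ∀ p ∈ J n, eval α p = 0}) ∧
      (∀ (α : Fin d × Fin m → k), α ≠ 0 → ∀ n : ℕ,
        (isMinRed k m d I (paramIdeal k m d I α) ∧
            redNum I (paramIdeal k m d I α) = n) ↔
          ((∀ p ∈ J n, eval α p = 0) ∧ ¬ (∀ p ∈ J (n + 1), eval α p = 0))) :=
  stmt6_general k m d I hI
end

section
/- Let A be a standard graded algebra of dimension d over an infinite field k. Then the big reduction number br(A) = max{r_Q(A) : Q a minimal reduction of A} is finite; equivalently, the descending chain of varieties V_0 ⊇ V_1 ⊇ ... parameterizing failures of reductions stabilizes, and br(A) is the largest n with V_{n+1} ≠ V_n. -/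
set_option synthInstance.maxHeartbeats 1000000
set_option maxHeartbeats 1000000

open MvPolynomial

/-!
For `α`, let `Q = paramIdeal α` be generated by the linear forms `ℓᵢ(α) = ∑ⱼ αᵢⱼ xⱼ`. Since
`A_{n+1} = A₁ A_n`, the property `Q_n = A_n` persists upwards, and it fails for `n = 0`; hence
`r_Q(A) = n` exactly when `α ∈ V_n \ V_{n+1}`, where `V_n = {α | Q_n ≠ A_n}`. As `I` is
homogeneous, `Q_{j+1} = A_{j+1}` says that the map `(R_j)^d → A_{j+1}, (gᵢ) ↦ ∑ gᵢ ℓᵢ(α)`,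
which depends linearly on `α`, is onto. Onto-ness of such a pencil is detected by its maximal
minors, so `V_{j+1}` is the common zero set of homogeneous polynomials in `α`. The ideals of
homogeneous polynomials vanishing on the decreasing `V_n` increase, hence stabilise by
Noetherianity, and so does `V_n`: only finitely many `n` have `V_{n+1} ≠ V_n`, and these are
exactly the reduction numbers of minimal reductions.
-/

theorem Matrix.isHomogeneous_det {σ R n : Type*} [CommRing R] [Fintype n] [DecidableEq n]
    {M : Matrix n n (MvPolynomial σ R)} {e : ℕ} (hM : ∀ i j, (M i j).IsHomogeneous e) :
    M.det.IsHomogeneous (Fintype.card n * e) := by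
  rw [Matrix.det_apply]
  refine IsHomogeneous.sum _ _ _ fun τ _ => ?_
  have hprod := IsHomogeneous.prod Finset.univ (fun c => M (τ c) c) (fun _ => e)
    fun c _ => hM (τ c) c
  rw [Finset.sum_const, Finset.card_univ, smul_eq_mul] at hprod
  rcases Int.units_eq_one_or (Equiv.Perm.sign τ) with h | h <;> rw [h]
  · simpa using hprod
  · simpa [Units.smul_def] using hprod.neg

theorem MvPolynomial.homogeneousComponent_add_mul {σ R : Type*} [CommSemiring R]
    {ψ : MvPolynomial σ R} {e : ℕ} (hψ : ψ.IsHomogeneous e) (n : ℕ) (φ : MvPolynomial σ R) :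
    homogeneousComponent (n + e) (φ * ψ) = homogeneousComponent n φ * ψ := by
  conv_lhs => rw [φ.as_sum]
  conv_rhs => rw [φ.as_sum]
  rw [Finset.sum_mul, map_sum, map_sum, Finset.sum_mul]
  refine Finset.sum_congr rfl fun s _ => ?_
  have hs := isHomogeneous_monomial (coeff s φ) (rfl : s.degree = s.degree)
  rw [homogeneousComponent_of_mem (hs.mul hψ), homogeneousComponent_of_mem hs]
  by_cases h : s.degree = n <;> simp [h]

section Pencil

variable {k σ U V : Type*} [Field k] [Fintype σ] [AddCommGroup U] [Module k U]
  [AddCommGroup V] [Module k V] [FiniteDimensional k V]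

/-- The polynomial is a maximal minor of the pencil `α ↦ ∑ x, α x • T x`, taken at columns
`u` where the pencil at `α₀` hits a basis. -/
theorem exists_isHomogeneous_eval_ne_zero_of_surjective (T : σ → U →ₗ[k] V) {α₀ : σ → k}
    (h₀ : Function.Surjective (∑ x, α₀ x • T x : U →ₗ[k] V)) :
    ∃ p : MvPolynomial σ k, (∃ s, p.IsHomogeneous s) ∧ eval α₀ p ≠ 0 ∧
      ∀ α, eval α p ≠ 0 → Function.Surjective (∑ x, α x • T x : U →ₗ[k] V) := by
  let b := Module.finBasis k V
  choose u hu using fun c => h₀ (b c)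
  let P : Matrix (Fin (Module.finrank k V)) (Fin (Module.finrank k V)) (MvPolynomial σ k) :=
    fun r c => ∑ x, C (b.repr (T x (u c)) r) * X x
  have hP : ∀ α, (eval α).mapMatrix P = b.toMatrix fun c => (∑ x, α x • T x) (u c) := by
    intro α
    ext r c
    change eval α (P r c) = _
    simp [P, Module.Basis.toMatrix_apply, mul_comm]
  refine ⟨P.det, ⟨_, Matrix.isHomogeneous_det (e := 1) fun r c => ?_⟩, ?_, fun α hα => ?_⟩
  · exact IsHomogeneous.sum _ _ _ fun x _ => isHomogeneous_C_mul_X _ x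
  · rw [RingHom.map_det, hP]
    simp only [hu, Module.Basis.toMatrix_self, Matrix.det_one]
    exact one_ne_zero
  · rw [RingHom.map_det, hP, ← Module.Basis.det_apply] at hα
    obtain ⟨-, hspan⟩ := b.is_basis_iff_det.mpr (isUnit_iff_ne_zero.mpr hα)
    rw [← LinearMap.range_eq_top, eq_top_iff, ← hspan, Submodule.span_le]
    rintro _ ⟨c, rfl⟩
    exact ⟨u c, rfl⟩

end Pencil

theorem MvPolynomial.exists_zeroSet_stabilizes {σ R : Type*} [CommRing R] [IsNoetherianRing R]
    [Finite σ] {J : ℕ → Set (MvPolynomial σ R)} (hJ : Monotone J) :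
    ∃ N, ∀ n ≥ N, {α : σ → R | ∀ p ∈ J n, eval α p = 0} = {α | ∀ p ∈ J N, eval α p = 0} := by
  obtain ⟨N, hN⟩ := monotone_stabilizes_iff_noetherian.mpr inferInstance
    ⟨fun n => Ideal.span (J n), fun _ _ h => Ideal.span_mono (hJ h)⟩
  have hzero : ∀ n (α : σ → R),
      (∀ p ∈ J n, eval α p = 0) ↔ ∀ p ∈ Ideal.span (J n), eval α p = 0 :=
    fun n α => (Ideal.span_le (I := RingHom.ker (eval α))).symm
  refine ⟨N, fun n hn => ?_⟩
  have hspan : Ideal.span (J n) = Ideal.span (J N) := (hN n hn).symm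
  ext α
  simp only [Set.mem_ofPred_eq, hzero, hspan]

def MvPolynomial.homogeneousVanishingSet {σ R : Type*} [CommSemiring R] (S : Set (σ → R)) :
    Set (MvPolynomial σ R) :=
  {p | (∃ s, p.IsHomogeneous s) ∧ ∀ α ∈ S, eval α p = 0}

theorem MvPolynomial.homogeneousVanishingSet_antitone {σ R : Type*} [CommSemiring R] :
    Antitone (homogeneousVanishingSet : Set (σ → R) → Set (MvPolynomial σ R)) :=
  fun _ _ hST _ hp => ⟨hp.1, fun α hα => hp.2 α (hST hα)⟩

theorem MvPolynomial.forall_mem_homogeneousVanishingSet_iff {σ R : Type*} [CommSemiring R]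
    {S : Set (σ → R)} (hS : ∀ α ∉ S, ∃ p ∈ homogeneousVanishingSet S, eval α p ≠ 0)
    (α : σ → R) : (∀ p ∈ homogeneousVanishingSet S, eval α p = 0) ↔ α ∈ S := by
  refine ⟨fun h => ?_, fun hα p hp => hp.2 α hα⟩
  by_contra hα
  obtain ⟨p, hp, hpα⟩ := hS α hα
  exact hpα (h p hp)

namespace StandardGraded

variable {k : Type*} [Field k] {m d : ℕ} {I : Ideal (MvPolynomial (Fin m) k)}

theorem mem_gpiece_iff {x : MvPolynomial (Fin m) k ⧸ I} {n : ℕ} :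
    x ∈ gpiece k m I n ↔ ∃ f, f.IsHomogeneous n ∧ Ideal.Quotient.mk I f = x := by
  simp [gpiece]

theorem gpiece_succ (n : ℕ) : gpiece k m I (n + 1) = gpiece k m I 1 * gpiece k m I n := by
  rw [gpiece, gpiece, gpiece, ← homogeneousSubmodule_one_pow (σ := Fin m) (R := k) (n + 1),
    pow_succ', homogeneousSubmodule_one_pow, Submodule.map_mul]

theorem gfull_monotone (Q : Ideal (MvPolynomial (Fin m) k ⧸ I)) : Monotone (gfull I Q) := by
  refine monotone_nat_of_le_succ fun n h => ?_
  rw [gfull, gpiece_succ, Submodule.mul_le]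
  exact fun a _ b hb => Q.mul_mem_left a (h hb)

theorem le_ker_constantCoeff (hI : ∀ f ∈ I, ∀ n : ℕ, homogeneousComponent n f ∈ I)
    (hI' : I ≠ ⊤) : I ≤ RingHom.ker (constantCoeff : MvPolynomial (Fin m) k →+* k) := by
  intro f hf
  by_contra hc
  have hC := hI f hf 0
  rw [homogeneousComponent_zero] at hC
  exact hI' (Ideal.eq_top_of_isUnit_mem _ hC ((isUnit_iff_ne_zero.mpr hc).map C))

theorem not_gfull_zero (hI : ∀ f ∈ I, ∀ n : ℕ, homogeneousComponent n f ∈ I) (hI' : I ≠ ⊤)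
    {Q : Ideal (MvPolynomial (Fin m) k ⧸ I)}
    (hQ : Q ≤ (RingHom.ker constantCoeff).map (Ideal.Quotient.mk I)) :
    ¬ gfull I Q 0 := by
  intro h
  have h1 : (1 : MvPolynomial (Fin m) k ⧸ I) ∈ Q :=
    h (mem_gpiece_iff.mpr ⟨1, isHomogeneous_one _ _, map_one _⟩)
  obtain ⟨g, hg, hg1⟩ :=
    (Ideal.mem_map_iff_of_surjective _ Ideal.Quotient.mk_surjective).mp (hQ h1)
  have hsub : 1 - g ∈ I := Ideal.Quotient.eq.mp (by rw [map_one, hg1])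
  simpa [RingHom.mem_ker.mp hg] using le_ker_constantCoeff hI hI' hsub

/-- The variety `V_n` of the paper. -/
def failLocus (I : Ideal (MvPolynomial (Fin m) k)) (d n : ℕ) : Set (Fin d × Fin m → k) :=
  {α | ¬ gfull I (paramIdeal k m d I α) n}

theorem mem_failLocus {n : ℕ} {α : Fin d × Fin m → k} :
    α ∈ failLocus I d n ↔ ¬ gfull I (paramIdeal k m d I α) n :=
  Iff.rfl

theorem failLocus_antitone : Antitone (failLocus I d) :=
  fun _ _ h _ hα hg => hα (gfull_monotone _ h hg)

theorem redNum_eq_iff {Q : Ideal (MvPolynomial (Fin m) k ⧸ I)} (h₀ : ¬ gfull I Q 0)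
    (hQ : ∃ N, gfull I Q N) {n : ℕ} : redNum I Q = n ↔ ¬ gfull I Q n ∧ gfull I Q (n + 1) := by
  obtain ⟨N, hN⟩ := hQ
  constructor
  · rintro rfl
    refine ⟨fun h => ?_,
      Nat.sInf_mem (s := {n | gfull I Q (n + 1)}) ⟨N, gfull_monotone Q (Nat.le_succ N) hN⟩⟩
    rcases hr : redNum I Q with _ | j <;> rw [hr] at h
    · exact h₀ h
    · exact Nat.notMem_of_lt_sInf (hr ▸ Nat.lt_succ_self j : j < redNum I Q) h
  · rintro ⟨hn, hsucc⟩
    refine le_antisymm (Nat.sInf_le hsucc) (le_csInf ⟨n, hsucc⟩ fun j hj => ?_)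
    by_contra! hjn
    exact hn (gfull_monotone Q hjn hj)

theorem exists_eq_paramIdeal_of_isMinRed {Q : Ideal (MvPolynomial (Fin m) k ⧸ I)}
    (hQ : isMinRed k m d I Q) : ∃ α, Q = paramIdeal k m d I α := by
  obtain ⟨⟨y, hy, rfl⟩, -⟩ := hQ
  have hlin : ∀ i, ∃ c : Fin m → k, ∑ j, c j • X j = y i := fun i =>
    Submodule.mem_span_range_iff_exists_fun k |>.mp
      (homogeneousSubmodule_one_eq_span_X (σ := Fin m) (R := k) ▸ hy i)
  choose c hc using hlin
  refine ⟨fun x => c x.1 x.2, ?_⟩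
  simp only [paramIdeal, ← hc, smul_eq_C_mul]

theorem paramIdeal_le_map_ker_constantCoeff (α : Fin d × Fin m → k) :
    paramIdeal k m d I α ≤ (RingHom.ker constantCoeff).map (Ideal.Quotient.mk I) := by
  refine Ideal.span_le.mpr ?_
  rintro _ ⟨i, rfl⟩
  exact Ideal.mem_map_of_mem _ (by simp [RingHom.mem_ker])

theorem paramIdeal_isMinRed_and_redNum_eq_iff
    (hI : ∀ f ∈ I, ∀ n : ℕ, homogeneousComponent n f ∈ I) (hI' : I ≠ ⊤)
    (α : Fin d × Fin m → k) (n : ℕ) :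
    (isMinRed k m d I (paramIdeal k m d I α) ∧ redNum I (paramIdeal k m d I α) = n) ↔
      α ∈ failLocus I d n ∧ α ∉ failLocus I d (n + 1) := by
  rw [mem_failLocus, mem_failLocus, not_not]
  have h₀ := not_gfull_zero hI hI' (paramIdeal_le_map_ker_constantCoeff α)
  have hgen : ∃ y : Fin d → MvPolynomial (Fin m) k,
      (∀ i, y i ∈ homogeneousSubmodule (Fin m) k 1) ∧
        paramIdeal k m d I α = Ideal.span (Set.range fun i => Ideal.Quotient.mk I (y i)) :=
    ⟨_, fun i => IsHomogeneous.sum _ _ _ fun j _ => isHomogeneous_C_mul_X _ j, rfl⟩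
  constructor
  · rintro ⟨⟨-, hQ⟩, hr⟩
    exact (redNum_eq_iff h₀ (hQ.imp fun N hN => hN N le_rfl)).mp hr
  · intro h
    exact ⟨⟨hgen, n + 1, fun _ hn => gfull_monotone _ hn h.2⟩, (redNum_eq_iff h₀ ⟨_, h.2⟩).mpr h⟩

/-- The pencil `α ↦ ∑ x, α x • mulVar I d j x`, sending `(gᵢ)` to `∑ gᵢ ℓᵢ(α)`, plays the role
of the paper's generic matrix `M_j(u)`. -/
noncomputable def mulVar (I : Ideal (MvPolynomial (Fin m) k)) (d j : ℕ) (x : Fin d × Fin m) :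
    (Fin d → homogeneousSubmodule (Fin m) k j) →ₗ[k] gpiece k m I (j + 1) :=
  (((Ideal.Quotient.mkₐ k I).toLinearMap ∘ₗ LinearMap.mulRight k (X x.2)).restrict
    fun g (hg : g.IsHomogeneous j) =>
      mem_gpiece_iff.mpr ⟨g * X x.2, hg.mul (isHomogeneous_X k x.2), rfl⟩) ∘ₗ
    LinearMap.proj x.1

theorem coe_mulVar_apply {j : ℕ} (x : Fin d × Fin m)
    (g : Fin d → homogeneousSubmodule (Fin m) k j) :
    (mulVar I d j x g : MvPolynomial (Fin m) k ⧸ I) =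
      Ideal.Quotient.mk I ((g x.1 : MvPolynomial (Fin m) k) * X x.2) :=
  rfl

theorem coe_sum_smul_mulVar_apply (α : Fin d × Fin m → k) {j : ℕ}
    (g : Fin d → homogeneousSubmodule (Fin m) k j) :
    ((∑ x, α x • mulVar I d j x) g : MvPolynomial (Fin m) k ⧸ I) =
      Ideal.Quotient.mk I (∑ i, (g i : MvPolynomial (Fin m) k) * ∑ l, C (α (i, l)) * X l) := by
  simp only [LinearMap.coe_sum, Finset.sum_apply, LinearMap.smul_apply,
    AddSubmonoidClass.coe_finsetSum, SetLike.val_smul, coe_mulVar_apply, Fintype.sum_prod_type,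
    Finset.mul_sum, map_sum]
  refine Finset.sum_congr rfl fun i _ => Finset.sum_congr rfl fun l _ => ?_
  rw [← Ideal.Quotient.mkₐ_eq_mk k, ← map_smul, smul_eq_C_mul, mul_left_comm]

theorem gfull_succ_iff_surjective (hI : ∀ f ∈ I, ∀ n : ℕ, homogeneousComponent n f ∈ I)
    (α : Fin d × Fin m → k) (j : ℕ) :
    gfull I (paramIdeal k m d I α) (j + 1) ↔
      Function.Surjective ⇑(∑ x, α x • mulVar I d j x) := by
  set ℓ : Fin d → MvPolynomial (Fin m) k := fun i => ∑ l, C (α (i, l)) * X l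
  have hℓ : ∀ i, (ℓ i).IsHomogeneous 1 :=
    fun i => IsHomogeneous.sum _ _ _ fun l _ => isHomogeneous_C_mul_X _ l
  constructor
  · rintro hfull ⟨_, hy⟩
    obtain ⟨f, hf, rfl⟩ := mem_gpiece_iff.mp hy
    obtain ⟨c, hc⟩ := Ideal.mem_span_range_iff_exists_fun.mp (hfull hy)
    choose g hg using fun i => Ideal.Quotient.mk_surjective (I := I) (c i)
    have hsub : f - ∑ i, g i * ℓ i ∈ I := by
      rw [← Ideal.Quotient.eq, ← hc, map_sum]
      simp only [map_mul, hg, ℓ]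
    -- the degree `j + 1` part of `f - ∑ gᵢ ℓᵢ` involves only the degree `j` parts of the `gᵢ`
    have hcomp := hI _ hsub (j + 1)
    simp only [map_sub, map_sum, homogeneousComponent_add_mul (hℓ _),
      homogeneousComponent_eq_self hf] at hcomp
    refine ⟨fun i => ⟨_, homogeneousComponent_mem j (g i)⟩, Subtype.ext ?_⟩
    rw [coe_sum_smul_mulVar_apply]
    exact (Ideal.Quotient.eq.mpr hcomp).symm
  · intro hsurj y hy
    obtain ⟨g, hg⟩ := hsurj ⟨y, hy⟩
    rw [← show _ = y from (coe_sum_smul_mulVar_apply α g).symm.trans (congrArg Subtype.val hg),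
      map_sum]
    exact Ideal.sum_mem _ fun i _ => by
      rw [map_mul]
      exact Ideal.mul_mem_left _ _ (Ideal.subset_span ⟨i, rfl⟩)

instance (n : ℕ) : FiniteDimensional k (gpiece k m I n) :=
  Module.Finite.iff_fg.mpr ((homogeneousSubmodule_fg (Fin m) k n).map _)

theorem exists_mem_homogeneousVanishingSet_failLocus
    (hI : ∀ f ∈ I, ∀ n : ℕ, homogeneousComponent n f ∈ I) (hI' : I ≠ ⊤) {n : ℕ}
    {α₀ : Fin d × Fin m → k} (h : α₀ ∉ failLocus I d n) :
    ∃ p ∈ homogeneousVanishingSet (failLocus I d n), eval α₀ p ≠ 0 := by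
  rw [mem_failLocus, not_not] at h
  rcases n with _ | j
  · exact absurd h (not_gfull_zero hI hI' (paramIdeal_le_map_ker_constantCoeff α₀))
  · obtain ⟨p, hp, hp₀, hpα⟩ := exists_isHomogeneous_eval_ne_zero_of_surjective (mulVar I d j)
      ((gfull_succ_iff_surjective hI α₀ j).mp h)
    refine ⟨p, ⟨hp, fun α hα => ?_⟩, hp₀⟩
    by_contra hne
    exact hα ((gfull_succ_iff_surjective hI α j).mpr (hpα α hne))

theorem setOf_redNum_eq (hI : ∀ f ∈ I, ∀ n : ℕ, homogeneousComponent n f ∈ I) (hI' : I ≠ ⊤) :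
    {r | ∃ Q, isMinRed k m d I Q ∧ redNum I Q = r} =
      {n | failLocus I d (n + 1) ≠ failLocus I d n} := by
  ext n
  constructor
  · rintro ⟨Q, hQ, hn⟩ heq
    obtain ⟨α, rfl⟩ := exists_eq_paramIdeal_of_isMinRed hQ
    obtain ⟨hα, hα'⟩ := (paramIdeal_isMinRed_and_redNum_eq_iff hI hI' α n).mp ⟨hQ, hn⟩
    exact hα' (heq ▸ hα)
  · intro hne
    obtain ⟨α, hα, hα'⟩ := Set.exists_of_ssubset
      ((failLocus_antitone n.le_succ : failLocus I d (n + 1) ⊆ _).ssubset_of_ne hne)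
    exact ⟨_, (paramIdeal_isMinRed_and_redNum_eq_iff hI hI' α n).mpr ⟨hα, hα'⟩⟩

end StandardGraded

open StandardGraded in
theorem stmt8_general (k : Type*) [Field k] (m d : ℕ)
    (I : Ideal (MvPolynomial (Fin m) k))
    (hI : ∀ f ∈ I, ∀ n : ℕ, homogeneousComponent n f ∈ I)
    (hd : ringKrullDim (MvPolynomial (Fin m) k ⧸ I) = d) :
    BddAbove {r : ℕ | ∃ Q, isMinRed k m d I Q ∧ redNum I Q = r} ∧
    ∃ J : ℕ → Set (MvPolynomial (Fin d × Fin m) k),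
      (∀ n, ∀ p ∈ J n, ∃ s : ℕ, p.IsHomogeneous s) ∧
      (∀ n, {α : Fin d × Fin m → k | ∀ p ∈ J (n + 1), eval α p = 0} ⊆
            {α : Fin d × Fin m → k | ∀ p ∈ J n, eval α p = 0}) ∧
      (∀ (α : Fin d × Fin m → k), α ≠ 0 → ∀ n : ℕ,
        (isMinRed k m d I (paramIdeal k m d I α) ∧
            redNum I (paramIdeal k m d I α) = n) ↔
          ((∀ p ∈ J n, eval α p = 0) ∧ ¬ (∀ p ∈ J (n + 1), eval α p = 0))) ∧
      (∃ N : ℕ, ∀ n ≥ N,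
        {α : Fin d × Fin m → k | ∀ p ∈ J (n + 1), eval α p = 0} =
          {α : Fin d × Fin m → k | ∀ p ∈ J n, eval α p = 0}) ∧
      sSup {r : ℕ | ∃ Q, isMinRed k m d I Q ∧ redNum I Q = r} =
        sSup {n : ℕ |
          {α : Fin d × Fin m → k | ∀ p ∈ J (n + 1), eval α p = 0} ≠
            {α : Fin d × Fin m → k | ∀ p ∈ J n, eval α p = 0}} := by
  have hI' : I ≠ ⊤ := fun h => by
    have := Ideal.Quotient.subsingleton_iff.mpr h
    simp [ringKrullDim_eq_bot_of_subsingleton] at hd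
  set J := fun n => homogeneousVanishingSet (failLocus I d n)
  have hJ : ∀ n α, (∀ p ∈ J n, eval α p = 0) ↔ α ∈ failLocus I d n := fun n =>
    forall_mem_homogeneousVanishingSet_iff fun _ hα =>
      exists_mem_homogeneousVanishingSet_failLocus hI hI' hα
  have hV : ∀ n, {α | ∀ p ∈ J n, eval α p = 0} = failLocus I d n := fun n => Set.ext (hJ n)
  obtain ⟨N, hN⟩ := exists_zeroSet_stabilizes (J := J)
    (homogeneousVanishingSet_antitone.comp failLocus_antitone)
  have hstab : ∀ n ≥ N, failLocus I d (n + 1) = failLocus I d n := fun n hn => by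
    rw [← hV, ← hV, hN n hn, hN (n + 1) (by omega)]
  rw [setOf_redNum_eq hI hI']
  refine ⟨⟨N, fun n hn => not_lt.mp fun h => hn (hstab n h.le)⟩, J, fun n p hp => hp.1,
    fun n => ?_, fun α _ n => ?_, ⟨N, fun n hn => ?_⟩, ?_⟩ <;> simp only [hJ, Set.ofPred_mem_eq]
  · exact failLocus_antitone n.le_succ
  · exact paramIdeal_isMinRed_and_redNum_eq_iff hI hI' α n
  · exact hstab n hn

/-- the big reduction number `br(A) = max{r_Q(A) : Q minimal reduction}`
is finite; equivalently, the descending chain of varieties `V₀ ⊇ V₁ ⊇ ⋯`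
(parameterizing reductions as in the previous statements) stabilizes, and `br(A)` is
the largest `n` with `V_{n+1} ≠ V_n`. -/
theorem stmt8 (k : Type*) [Field k] [Infinite k] (m d : ℕ)
    (I : Ideal (MvPolynomial (Fin m) k))
    (hI : ∀ f ∈ I, ∀ n : ℕ, homogeneousComponent n f ∈ I)
    (hd : ringKrullDim (MvPolynomial (Fin m) k ⧸ I) = d) :
    BddAbove {r : ℕ | ∃ Q, isMinRed k m d I Q ∧ redNum I Q = r} ∧
    ∃ J : ℕ → Set (MvPolynomial (Fin d × Fin m) k),
      (∀ n, ∀ p ∈ J n, ∃ s : ℕ, p.IsHomogeneous s) ∧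
      (∀ n, {α : Fin d × Fin m → k | ∀ p ∈ J (n + 1), eval α p = 0} ⊆
            {α : Fin d × Fin m → k | ∀ p ∈ J n, eval α p = 0}) ∧
      (∀ (α : Fin d × Fin m → k), α ≠ 0 → ∀ n : ℕ,
        (isMinRed k m d I (paramIdeal k m d I α) ∧
            redNum I (paramIdeal k m d I α) = n) ↔
          ((∀ p ∈ J n, eval α p = 0) ∧ ¬ (∀ p ∈ J (n + 1), eval α p = 0))) ∧
      (∃ N : ℕ, ∀ n ≥ N,
        {α : Fin d × Fin m → k | ∀ p ∈ J (n + 1), eval α p = 0} =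
          {α : Fin d × Fin m → k | ∀ p ∈ J n, eval α p = 0}) ∧
      sSup {r : ℕ | ∃ Q, isMinRed k m d I Q ∧ redNum I Q = r} =
        sSup {n : ℕ |
          {α : Fin d × Fin m → k | ∀ p ∈ J (n + 1), eval α p = 0} ≠
            {α : Fin d × Fin m → k | ∀ p ∈ J n, eval α p = 0}} :=
  stmt8_general k m d I hI hd
end

section
/- Let S be a Noetherian standard graded algebra over a local ring, Ĩ a graded ideal of S, and t an element of the base local ring's maximal ideal that is a non-zerodivisor modulo Ĩ, with A = S/Ĩ and Ā = A/tA. For d linear forms t_1,...,t_d of A with images t̄_1,...,t̄_d in Ā and ideals Q = (t_1,...,t_d), Q̄ = (t̄_1,...,t̄_d): Q is a reduction of A (Q_n = A_n for n ≫ 0) if and only if Q̄ is a reduction of Ā, and in that case r_Q(A) = r_{Q̄}(Ā). Consequently r(S/Ĩ) = r(R/in_λ(I)) in the setup S = R ⊗_k k[t]_{(t)}, Ā ≅ R/in_λ(I). -/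
/-! Since `t` has degree `0` and lies in the maximal ideal `𝔪` of `B`, `Q̄_n = Ā_n` says
`A_n = Q_n + t A_n ⊆ Q_n + 𝔪 A_n`, so Nakayama's lemma for the finitely generated `B`-module
`A_n` gives `Q_n = A_n`. Hence `Q` and `Q̄` are full in exactly the same degrees, for every choice
of linear forms; this yields the reduction criterion, the equality `r_Q(A) = r_{Q̄}(Ā)`, and
`r(A) = r(Ā)`. -/

set_option synthInstance.maxHeartbeats 1000000
set_option maxHeartbeats 1000000

open MvPolynomial

/-- The degree-`n` graded component of the standard graded algebra `S/J` over the
(local) base ring `B`. -/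
noncomputable def gpieceB (B : Type*) [CommRing B] (m : ℕ)
    (J : Ideal (MvPolynomial (Fin m) B)) (n : ℕ) :
    Submodule B (MvPolynomial (Fin m) B ⧸ J) :=
  (homogeneousSubmodule (Fin m) B n).map (Ideal.Quotient.mkₐ B J).toLinearMap

/-- `Q_n = A_n`. -/
def gfullB {B : Type*} [CommRing B] {m : ℕ} (J : Ideal (MvPolynomial (Fin m) B))
    (Q : Ideal (MvPolynomial (Fin m) B ⧸ J)) (n : ℕ) : Prop :=
  gpieceB B m J n ≤ Q.restrictScalars B

/-- The reduction number `r_Q = min{n : Q_{n+1} = A_{n+1}}`. -/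
noncomputable def redNumB {B : Type*} [CommRing B] {m : ℕ}
    (J : Ideal (MvPolynomial (Fin m) B))
    (Q : Ideal (MvPolynomial (Fin m) B ⧸ J)) : ℕ :=
  sInf {n : ℕ | gfullB J Q (n + 1)}

/-- The reduction number `r(S/J)`: the minimum of `r_Q` over the (minimal) reductions
`Q` generated by `d` linear forms. -/
noncomputable def rAlgB (B : Type*) [CommRing B] (m d : ℕ)
    (J : Ideal (MvPolynomial (Fin m) B)) : ℕ :=
  sInf {r : ℕ | ∃ (y : Fin d → MvPolynomial (Fin m) B)
      (Q : Ideal (MvPolynomial (Fin m) B ⧸ J)),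
    (∀ i, y i ∈ homogeneousSubmodule (Fin m) B 1) ∧
    Q = Ideal.span (Set.range fun i => Ideal.Quotient.mk J (y i)) ∧
    (∃ N : ℕ, ∀ n ≥ N, gfullB J Q n) ∧ redNumB J Q = r}

open IsLocalRing

section Homogeneous

variable {σ B : Type*} [CommRing B]

attribute [local instance] MvPolynomial.gradedAlgebra

theorem isHomogeneous_of_homogeneousComponent_mem {I : Ideal (MvPolynomial σ B)}
    (hI : ∀ f ∈ I, ∀ n : ℕ, homogeneousComponent n f ∈ I) :
    I.IsHomogeneous (homogeneousSubmodule σ B) := fun n f hf => by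
  convert hI f hf n using 1
  exact decomposition.decompose'_apply f n

theorem isHomogeneous_span_sup {I : Ideal (MvPolynomial σ B)}
    (hI : I.IsHomogeneous (homogeneousSubmodule σ B))
    {ι : Type*} {y : ι → MvPolynomial σ B} (hy : ∀ i, y i ∈ homogeneousSubmodule σ B 1) :
    (Ideal.span (Set.range y) ⊔ I).IsHomogeneous (homogeneousSubmodule σ B) :=
  (Ideal.homogeneous_span _ _ (by rintro _ ⟨i, rfl⟩; exact ⟨1, hy i⟩)).sup hI

theorem homogeneousSubmodule_le_of_le_sup_span_C [Finite σ] [IsLocalRing B]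
    {I : Ideal (MvPolynomial σ B)} (hI : I.IsHomogeneous (homogeneousSubmodule σ B))
    {t : B} (ht : t ∈ maximalIdeal B) {n : ℕ}
    (h : homogeneousSubmodule σ B n ≤ (I ⊔ Ideal.span {C t}).restrictScalars B) :
    homogeneousSubmodule σ B n ≤ I.restrictScalars B := by
  refine Submodule.le_of_le_smul_of_le_jacobson_bot (homogeneousSubmodule_fg _ _ n)
    (jacobson_eq_maximalIdeal ⊥ bot_ne_top).ge fun f hf => ?_
  obtain ⟨a, ha, b, hb, rfl⟩ := Submodule.mem_sup.mp (h hf)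
  obtain ⟨g, rfl⟩ := Ideal.mem_span_singleton'.mp hb
  have hf' : homogeneousComponent n (a + g * C t) = a + g * C t := by
    rw [homogeneousComponent_of_mem hf, if_pos rfl]
  rw [← hf', map_add, mul_comm, ← smul_eq_C_mul, map_smul]
  exact Submodule.add_mem_sup (homogeneousComponent_mem_of_mem hI ha n)
    (Submodule.smul_mem_smul ht (homogeneousComponent_mem n g))

end Homogeneous

section Reduction

variable {B : Type*} [CommRing B] {m : ℕ}

attribute [local instance] MvPolynomial.gradedAlgebra

theorem gfullB_span_iff (J : Ideal (MvPolynomial (Fin m) B)) {ι : Type*}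
    (y : ι → MvPolynomial (Fin m) B) (n : ℕ) :
    gfullB J (Ideal.span (Set.range fun i => Ideal.Quotient.mk J (y i))) n ↔
      homogeneousSubmodule (Fin m) B n ≤ (Ideal.span (Set.range y) ⊔ J).restrictScalars B := by
  have hmap : Ideal.span (Set.range fun i => Ideal.Quotient.mk J (y i)) =
      (Ideal.span (Set.range y)).map (Ideal.Quotient.mk J) := by
    rw [Ideal.map_span, ← Set.range_comp]; rfl
  rw [gfullB, gpieceB, hmap, Submodule.map_le_iff_le_comap]
  exact forall₂_congr fun f _ => Ideal.mem_quotient_iff_mem_sup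

theorem gfullB_span_iff_sup_span_C [IsLocalRing B] {J : Ideal (MvPolynomial (Fin m) B)}
    (hJ : J.IsHomogeneous (homogeneousSubmodule (Fin m) B)) {t : B} (ht : t ∈ maximalIdeal B)
    {ι : Type*} {y : ι → MvPolynomial (Fin m) B} (hy : ∀ i, y i ∈ homogeneousSubmodule (Fin m) B 1)
    (n : ℕ) :
    gfullB J (Ideal.span (Set.range fun i => Ideal.Quotient.mk J (y i))) n ↔
      gfullB (J ⊔ Ideal.span {C t})
        (Ideal.span (Set.range fun i => Ideal.Quotient.mk (J ⊔ Ideal.span {C t}) (y i))) n := by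
  rw [gfullB_span_iff, gfullB_span_iff, ← sup_assoc]
  exact ⟨fun h => h.trans (Submodule.restrictScalars_mono B le_sup_left),
    homogeneousSubmodule_le_of_le_sup_span_C (isHomogeneous_span_sup hJ hy) ht⟩

theorem redNumB_congr {J J' : Ideal (MvPolynomial (Fin m) B)}
    {Q : Ideal (MvPolynomial (Fin m) B ⧸ J)} {Q' : Ideal (MvPolynomial (Fin m) B ⧸ J')}
    (h : ∀ n, gfullB J Q n ↔ gfullB J' Q' n) : redNumB J Q = redNumB J' Q' := by
  simp only [redNumB, h]

theorem rAlgB_congr {J J' : Ideal (MvPolynomial (Fin m) B)} {d : ℕ}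
    (h : ∀ y : Fin d → MvPolynomial (Fin m) B, (∀ i, y i ∈ homogeneousSubmodule (Fin m) B 1) →
      ∀ n, gfullB J (Ideal.span (Set.range fun i => Ideal.Quotient.mk J (y i))) n ↔
        gfullB J' (Ideal.span (Set.range fun i => Ideal.Quotient.mk J' (y i))) n) :
    rAlgB B m d J = rAlgB B m d J' := by
  simp only [rAlgB, exists_and_left, exists_eq_left]
  congr 1
  ext r
  refine exists_congr fun y => and_congr_right fun hy => ?_
  rw [redNumB_congr (h y hy)]
  simp only [h y hy]

end Reduction

theorem stmt11_general (B : Type*) [CommRing B] [IsLocalRing B] (m : ℕ)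
    (It : Ideal (MvPolynomial (Fin m) B))
    (hIt : ∀ f ∈ It, ∀ n : ℕ, homogeneousComponent n f ∈ It)
    (t : B) (ht : t ∈ IsLocalRing.maximalIdeal B)
    (It' : Ideal (MvPolynomial (Fin m) B))
    (hIt' : It' = It ⊔ Ideal.span {C t}) :
    (∀ (d : ℕ) (y : Fin d → MvPolynomial (Fin m) B),
      (∀ i, y i ∈ homogeneousSubmodule (Fin m) B 1) →
      ∀ (Q : Ideal (MvPolynomial (Fin m) B ⧸ It))
        (Qbar : Ideal (MvPolynomial (Fin m) B ⧸ It')),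
        Q = Ideal.span (Set.range fun i => Ideal.Quotient.mk It (y i)) →
        Qbar = Ideal.span (Set.range fun i => Ideal.Quotient.mk It' (y i)) →
        ((∃ N : ℕ, ∀ n ≥ N, gfullB It Q n) ↔ (∃ N : ℕ, ∀ n ≥ N, gfullB It' Qbar n)) ∧
        ((∃ N : ℕ, ∀ n ≥ N, gfullB It Q n) → redNumB It Q = redNumB It' Qbar)) ∧
    (∀ d : ℕ, rAlgB B m d It = rAlgB B m d It') := by
  subst hIt'
  have hhom := isHomogeneous_of_homogeneousComponent_mem hIt
  refine ⟨fun d y hy Q Qbar hQ hQbar => ?_,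
    fun d => rAlgB_congr fun y hy => gfullB_span_iff_sup_span_C hhom ht hy⟩
  subst hQ hQbar
  have h := gfullB_span_iff_sup_span_C hhom ht hy
  exact ⟨exists_congr fun N => forall₂_congr fun n _ => h n, fun _ => redNumB_congr h⟩

/-- let `S` be a Noetherian standard graded algebra over a local ring
`B`, `Ĩ` a graded ideal, `t ∈ 𝔪_B` a non-zerodivisor modulo `Ĩ`, `A = S/Ĩ` and
`Ā = A/tA = S/(Ĩ + (t))`.  For linear forms `t₁,...,t_d` generating `Q ⊆ A` with
images generating `Q̄ ⊆ Ā`:  `Q` is a reduction of `A` iff `Q̄` is a reduction of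
`Ā`, and in that case `r_Q(A) = r_{Q̄}(Ā)`; consequently `r(A) = r(Ā)`
(`= r(R/in_λ(I))` in the deformation setup, where `Ā ≅ R/in_λ(I)`). -/
theorem stmt11 (B : Type*) [CommRing B] [IsLocalRing B] [IsNoetherianRing B] (m : ℕ)
    (It : Ideal (MvPolynomial (Fin m) B))
    (hIt : ∀ f ∈ It, ∀ n : ℕ, homogeneousComponent n f ∈ It)
    (t : B) (ht : t ∈ IsLocalRing.maximalIdeal B)
    (hnzd : ∀ g : MvPolynomial (Fin m) B, C t * g ∈ It → g ∈ It)
    (It' : Ideal (MvPolynomial (Fin m) B))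
    (hIt' : It' = It ⊔ Ideal.span {C t}) :
    (∀ (d : ℕ) (y : Fin d → MvPolynomial (Fin m) B),
      (∀ i, y i ∈ homogeneousSubmodule (Fin m) B 1) →
      ∀ (Q : Ideal (MvPolynomial (Fin m) B ⧸ It))
        (Qbar : Ideal (MvPolynomial (Fin m) B ⧸ It')),
        Q = Ideal.span (Set.range fun i => Ideal.Quotient.mk It (y i)) →
        Qbar = Ideal.span (Set.range fun i => Ideal.Quotient.mk It' (y i)) →
        ((∃ N : ℕ, ∀ n ≥ N, gfullB It Q n) ↔ (∃ N : ℕ, ∀ n ≥ N, gfullB It' Qbar n)) ∧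
        ((∃ N : ℕ, ∀ n ≥ N, gfullB It Q n) → redNumB It Q = redNumB It' Qbar)) ∧
    (∀ d : ℕ, rAlgB B m d It = rAlgB B m d It') :=
  stmt11_general B m It hIt t ht It' hIt'
end
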